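/- arXiv:1602.06084 — 7 statements merged into one kernel-verified Lean document; each statement's English description precedes it below -/
import Mathlib

section
/- Let Φ be a median algebra and define the iterated operation μ(x₁;b)=x₁, μ(x₁,…,x_{k+1};b)=μ(μ(x₁,…,x_k;b), x_{k+1}, b). Then the value μ(x₁,…,xₙ;b) is invariant under any permutation of the points x₁,…,xₙ. -/
structure MedianAlgebra (Phi : Type*) where
  med : Phi → Phi → Phi → Phi
  m1a : ∀ a b c, med a b c = med b c a
  m1b : ∀ a b c, med a b c = med b a c
  m2 : ∀ a b, med a a b = a
  m3 : ∀ a b c d e, med a b (med c d e) = med (med a b c) (med a b d) e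

/-- Iterated median μ(x₁,…,xₙ;b): μ(x₁;b)=x₁, μ(x₁,…,x_{k+1};b)=μ(μ(x₁,…,x_k;b),x_{k+1},b). -/
def iterMed {Phi : Type*} (M : MedianAlgebra Phi) (b : Phi) : List Phi → Phi
  | [] => b
  | x :: xs => xs.foldl (fun acc y => M.med acc y b) x

/-! For fixed `b`, the operation `x ⊓ y := μ(x, y, b)` is idempotent, commutative, absorbs a
repeated argument and is right-commutative (it is the meet of the median semilattice based at
`b`). Hence folding it over a list from any of the list's own elements gives the same value, and
`iterMed` is such a fold. -/

namespace MedianAlgebra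

variable {Phi : Type*} (M : MedianAlgebra Phi) (b : Phi)

theorem med_right_comm (a x y : Phi) :
    M.med (M.med a x b) y b = M.med (M.med a y b) x b :=
  calc M.med (M.med a x b) y b
      = M.med y b (M.med b a x) := by rw [M.m1a _ y, ← M.m1a b a x]
    _ = M.med (M.med y b b) (M.med y b a) x := M.m3 _ _ _ _ _
    _ = M.med (M.med a y b) x b := by
      rw [M.m1a y b b, M.m2, M.m1a y b a, M.m1a b a y, M.m1a b]

theorem med_med_self (a x : Phi) : M.med (M.med a x b) x b = M.med a x b :=
  calc M.med (M.med a x b) x b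
      = M.med x b (M.med x b a) := by rw [M.m1a _ x, M.m1a a]
    _ = M.med (M.med x b x) (M.med x b b) a := M.m3 _ _ _ _ _
    _ = M.med a x b := by rw [← M.m1a x x b, M.m2, M.m1a x b b, M.m2, M.m1a a x b]

theorem foldl_med_perm (a : Phi) {l₁ l₂ : List Phi} (h : l₁.Perm l₂) :
    l₁.foldl (fun acc y => M.med acc y b) a = l₂.foldl (fun acc y => M.med acc y b) a :=
  h.foldl_eq' (fun x _ y _ z => M.med_right_comm b z x y) a

theorem foldl_med_absorb (a : Phi) {x : Phi} {l : List Phi} (hx : x ∈ l) :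
    l.foldl (fun acc y => M.med acc y b) (M.med a x b) =
      l.foldl (fun acc y => M.med acc y b) a := by
  classical
  have hl : l.Perm (x :: l.erase x) := List.perm_cons_erase hx
  rw [M.foldl_med_perm b _ hl, M.foldl_med_perm b _ hl, List.foldl_cons, List.foldl_cons,
    M.med_med_self]

theorem foldl_med_eq_of_mem {x y : Phi} {l : List Phi} (hx : x ∈ l) (hy : y ∈ l) :
    l.foldl (fun acc z => M.med acc z b) x = l.foldl (fun acc z => M.med acc z b) y := by
  rw [← M.foldl_med_absorb b x hy, M.m1b, M.foldl_med_absorb b y hx]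

theorem iterMed_eq_foldl_of_mem {x : Phi} {l : List Phi} (hx : x ∈ l) :
    iterMed M b l = l.foldl (fun acc y => M.med acc y b) x := by
  obtain ⟨y, ys, rfl⟩ := List.exists_cons_of_ne_nil (List.ne_nil_of_mem hx)
  rw [M.foldl_med_eq_of_mem b hx List.mem_cons_self, List.foldl_cons, M.m2, iterMed]

end MedianAlgebra

theorem stmt1_general {Phi : Type*} (M : MedianAlgebra Phi) (b : Phi)
    (l₁ l₂ : List Phi) (hperm : l₁.Perm l₂) :
    iterMed M b l₁ = iterMed M b l₂ := by
  rcases l₁ with _ | ⟨x, xs⟩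
  · rw [List.nil_perm.mp hperm]
  · have hx₂ : x ∈ l₂ := hperm.subset List.mem_cons_self
    rw [M.iterMed_eq_foldl_of_mem b List.mem_cons_self, M.foldl_med_perm b x hperm,
      M.iterMed_eq_foldl_of_mem b hx₂]

theorem stmt1 {Phi : Type*} (M : MedianAlgebra Phi) (b : Phi)
    (l₁ l₂ : List Phi) (hne : l₁ ≠ []) (hperm : l₁.Perm l₂) :
    iterMed M b l₁ = iterMed M b l₂ :=
  stmt1_general M b l₁ l₂ hperm
end

section
/- Let Φ be a median algebra with intervals [a,b]={c : μ(a,b,c)=c} and iterated operation μ(x₁,…,xₙ;b) defined recursively by μ(x₁;b)=x₁ and μ(x₁,…,x_{k+1};b)=μ(μ(x₁,…,x_k;b),x_{k+1},b). If a ∈ Φ and x₁,…,xₙ ∈ [a,b], then xᵢ ∈ [a, μ(x₁,…,xₙ;b)] for every i. -/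
section Aux
variable {Phi : Type*} (M : MedianAlgebra Phi)

lemma MA.swap23 (p q r : Phi) : M.med p q r = M.med p r q :=
  (M.m1b p q r).trans (M.m1a q p r)

lemma MA.m2a (p q : Phi) : M.med p q q = q := by
  rw [M.m1a]; exact M.m2 q p

lemma MA.m2b (p q : Phi) : M.med p q p = p := by
  rw [M.m1b, M.m1a]; exact M.m2 p q

lemma MA.absorb (p q r : Phi) : M.med p q (M.med p q r) = M.med p q r := by
  rw [M.m3, MA.m2b, MA.m2a]

/-- transitivity: c ∈ [x,b], z ∈ [c,b] ⇒ z ∈ [x,b] -/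
lemma MA.trans_int (x b c z : Phi) (h1 : M.med x b c = c) (h2 : M.med c b z = z) :
    M.med x b z = z := by
  conv_lhs => rw [← h2]
  rw [M.m3, h1, MA.m2a]
  exact h2

lemma MA.step_mem (acc y b : Phi) : M.med acc b (M.med acc y b) = M.med acc y b := by
  rw [MA.swap23 M acc y b, MA.absorb]

lemma MA.step_mem2 (acc y b : Phi) : M.med y b (M.med acc y b) = M.med acc y b := by
  rw [M.m1b acc y b, MA.step_mem]

/-- x ∈ [a,b], c ∈ [x,b] ⇒ x ∈ [a,c] -/
lemma MA.lemma1 (a b x c : Phi) (hx : M.med a b x = x) (hc : M.med x b c = c) :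
    M.med a c x = x := by
  rw [MA.swap23]
  conv_lhs => rw [← hc]
  rw [M.m3, MA.m2a]
  have hb : M.med a x b = x := by rw [MA.swap23]; exact hx
  rw [hb, M.m2]

lemma MA.key (a b : Phi) (l : List Phi) : ∀ (acc : Phi), M.med a b acc = acc →
    (∀ x ∈ l, M.med a b x = x) →
    M.med acc b (l.foldl (fun p y => M.med p y b) acc) =
      l.foldl (fun p y => M.med p y b) acc ∧
    ∀ x ∈ l, M.med x b (l.foldl (fun p y => M.med p y b) acc) =
      l.foldl (fun p y => M.med p y b) acc := by
  induction l with
  | nil => intro acc _ _; exact ⟨MA.m2b M acc b, by simp⟩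
  | cons y t ih =>
    intro acc hacc hl
    have hy : M.med a b y = y := hl y (by simp)
    have hacc' : M.med a b (M.med acc y b) = M.med acc y b := by
      rw [M.m3, hacc, hy]
    obtain ⟨h1, h2⟩ := ih (M.med acc y b) hacc' (fun x hx => hl x (by simp [hx]))
    simp only [List.foldl_cons]
    refine ⟨MA.trans_int M acc b _ _ (MA.step_mem M acc y b) h1, ?_⟩
    intro x hx
    rcases List.mem_cons.mp hx with rfl | hx
    · exact MA.trans_int M x b _ _ (MA.step_mem2 M acc x b) h1
    · exact h2 x hx

end Aux

theorem stmt4 {Phi : Type*} (M : MedianAlgebra Phi) (a b : Phi)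
    (l : List Phi) (hne : l ≠ []) (hl : ∀ x ∈ l, M.med a b x = x) :
    ∀ x ∈ l, M.med a (iterMed M b l) x = x := by
  obtain ⟨hd, tl, rfl⟩ := List.exists_cons_of_ne_nil hne
  have hhd : M.med a b hd = hd := hl hd (by simp)
  obtain ⟨h1, h2⟩ := MA.key M a b tl hd hhd (fun x hx => hl x (by simp [hx]))
  intro x hx
  have hF : M.med x b (iterMed M b (hd :: tl)) = iterMed M b (hd :: tl) := by
    rcases List.mem_cons.mp hx with rfl | hx
    · exact h1
    · exact h2 x hx
  exact MA.lemma1 M a b x _ (hl x hx) hF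
end

section
/- Let Φ be a median algebra and define μ(x₁,…,xₙ;b) recursively as μ(x₁;b)=x₁, μ(x₁,…,x_{k+1};b)=μ(μ(x₁,…,x_k;b),x_{k+1},b). Then ⋂_{i=1}^{n} [xᵢ, b] = [μ(x₁,…,xₙ;b), b]. -/
namespace MedianAlgebra

variable {Phi : Type*} (M : MedianAlgebra Phi)

lemma p132 (a b c : Phi) : M.med a b c = M.med a c b := by
  rw [M.m1a, M.m1a, M.m1b]

lemma p321 (a b c : Phi) : M.med a b c = M.med c b a := by
  rw [M.m1a, M.m1b]

lemma m2' (a b : Phi) : M.med a b b = b := by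
  rw [M.m1a, M.m2]

lemma m2'' (a b : Phi) : M.med a b a = a := by
  rw [M.p132, M.m2]

lemma absorb (x y b : Phi) : M.med x b (M.med x y b) = M.med x y b := by
  rw [M.m3, M.m2'', M.p132 x (M.med x b y) b, M.m3, M.m2'', M.m2', M.p132]

lemma pair_mem (x y b c : Phi) :
    (M.med x b c = c ∧ M.med y b c = c) ↔ M.med (M.med x y b) b c = c := by
  constructor
  · rintro ⟨hx, hy⟩
    have hbx : M.med b c x = c := by rw [M.m1a, M.m1a]; exact hx
    have hby : M.med b c y = c := by rw [M.m1a, M.m1a]; exact hy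
    rw [M.p321, M.m1b, M.m3, hbx, hby, M.m2]
  · intro h
    have hx : M.med x b c = c := by
      calc M.med x b c = M.med x b (M.med (M.med x y b) b c) := by rw [h]
        _ = M.med (M.med x b (M.med x y b)) (M.med x b b) c := M.m3 ..
        _ = M.med (M.med x y b) b c := by rw [M.absorb, M.m2']
        _ = c := h
    have h' : M.med (M.med y x b) b c = c := by rw [M.m1b y x b]; exact h
    have hy : M.med y b c = c := by
      calc M.med y b c = M.med y b (M.med (M.med y x b) b c) := by rw [h']
        _ = M.med (M.med y b (M.med y x b)) (M.med y b b) c := M.m3 ..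
        _ = M.med (M.med y x b) b c := by rw [M.absorb, M.m2']
        _ = c := h'
    exact ⟨hx, hy⟩

lemma key (b c x0 : Phi) (xs : List Phi) :
    (∀ x ∈ x0 :: xs, M.med x b c = c) ↔
      M.med (xs.foldl (fun acc y => M.med acc y b) x0) b c = c := by
  induction xs generalizing x0 with
  | nil => simp
  | cons y ys ih =>
    rw [List.foldl_cons, ← ih (M.med x0 y b)]
    have hp := M.pair_mem x0 y b c
    simp only [List.forall_mem_cons] at *
    tauto

end MedianAlgebra

theorem stmt6 {Phi : Type*} (M : MedianAlgebra Phi) (b : Phi)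
    (l : List Phi) (hne : l ≠ []) :
    (⋂ x ∈ {y : Phi | y ∈ l}, {c | M.med x b c = c})
      = {c | M.med (iterMed M b l) b c = c} := by
  obtain ⟨x0, xs, rfl⟩ := List.exists_cons_of_ne_nil hne
  ext c
  simp only [Set.mem_iInter, Set.mem_setOf_eq]
  exact M.key b c x0 xs
end

section
/- Let X be a finite or countable set and χ_A = (1/|A|)·1_A ∈ ℓ¹(X) the normalized characteristic function of a finite nonempty set A. Then for finite nonempty A,B ⊆ X, ‖χ_A − χ_B‖₁ ≤ 2(1 − |A∩B| / |A∪B|). -/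
/-!
Pointwise `|a - b| = a + b - 2 min(a, b)`, so `‖χ_A - χ_B‖₁ = ‖χ_A‖₁ + ‖χ_B‖₁ - 2 ∑ min(χ_A, χ_B)`.
Each `‖χ_·‖₁` is at most `1`, and on `A ∩ B` both `1/|A|` and `1/|B|` are at least `1/|A ∪ B|`,
so the overlap sum is at least `|A ∩ B| / |A ∪ B|`.
-/

section

open Finset

variable {X : Type*} [DecidableEq X]

noncomputable def normalizedIndicator (A : Finset X) (x : X) : ℝ :=
  if x ∈ A then ((#A : ℝ))⁻¹ else 0

namespace normalizedIndicator

lemma nonneg (A : Finset X) (x : X) : 0 ≤ normalizedIndicator A x := by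
  unfold normalizedIndicator
  split_ifs <;> positivity

lemma eq_zero_of_notMem {A : Finset X} {x : X} (hx : x ∉ A) : normalizedIndicator A x = 0 :=
  if_neg hx

lemma sum_le_one {A s : Finset X} (hAs : A ⊆ s) : ∑ x ∈ s, normalizedIndicator A x ≤ 1 := by
  simp only [normalizedIndicator, sum_ite_mem, inter_eq_right.mpr hAs, sum_const, nsmul_eq_mul]
  exact mul_inv_le_one

lemma inv_card_union_le {A B : Finset X} {x : X} (hx : x ∈ A) :
    ((#(A ∪ B) : ℝ))⁻¹ ≤ normalizedIndicator A x := by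
  rw [normalizedIndicator, if_pos hx]
  have hA : (0 : ℝ) < #A := by exact_mod_cast card_pos.mpr ⟨x, hx⟩
  exact inv_anti₀ hA (by exact_mod_cast card_le_card subset_union_left)

lemma card_inter_div_card_union_le_sum_min (A B : Finset X) :
    (#(A ∩ B) : ℝ) / #(A ∪ B) ≤
      ∑ x ∈ A ∪ B, min (normalizedIndicator A x) (normalizedIndicator B x) :=
  calc (#(A ∩ B) : ℝ) / #(A ∪ B)
      = ∑ _x ∈ A ∩ B, ((#(A ∪ B) : ℝ))⁻¹ := by
        rw [sum_const, nsmul_eq_mul, div_eq_mul_inv]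
    _ ≤ ∑ x ∈ A ∩ B, min (normalizedIndicator A x) (normalizedIndicator B x) := by
        refine sum_le_sum fun x hx => le_min ?_ ?_
        · exact inv_card_union_le (mem_inter.mp hx).1
        · exact union_comm A B ▸ inv_card_union_le (mem_inter.mp hx).2
    _ ≤ ∑ x ∈ A ∪ B, min (normalizedIndicator A x) (normalizedIndicator B x) :=
        sum_le_sum_of_subset_of_nonneg inter_subset_union fun x _ _ =>
          le_min (nonneg A x) (nonneg B x)

theorem tsum_abs_sub_le (A B : Finset X) :
    ∑' x, |normalizedIndicator A x - normalizedIndicator B x|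
      ≤ 2 * (1 - (#(A ∩ B) : ℝ) / #(A ∪ B)) := by
  have hsupp : ∀ x ∉ A ∪ B, |normalizedIndicator A x - normalizedIndicator B x| = 0 := by
    intro x hx
    rw [mem_union, not_or] at hx
    simp [eq_zero_of_notMem hx.1, eq_zero_of_notMem hx.2]
  have habs : ∀ a b : ℝ, |a - b| = a + b - 2 * min a b := fun a b => by
    linarith [max_sub_min_eq_abs' a b, min_add_max a b]
  rw [tsum_eq_sum hsupp]
  simp only [habs, sum_sub_distrib, sum_add_distrib, ← mul_sum]
  linarith [sum_le_one (s := A ∪ B) subset_union_left,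
    sum_le_one (s := A ∪ B) subset_union_right,
    card_inter_div_card_union_le_sum_min A B]

end normalizedIndicator

end

theorem stmt11_general {X : Type*} [DecidableEq X]
    (A B : Finset X) :
    ∑' x : X,
      |(if x ∈ A then ((A.card : ℝ))⁻¹ else 0) - (if x ∈ B then ((B.card : ℝ))⁻¹ else 0)|
      ≤ 2 * (1 - ((A ∩ B).card : ℝ) / ((A ∪ B).card : ℝ)) :=
  normalizedIndicator.tsum_abs_sub_le A B

theorem stmt11 {X : Type*} [Countable X] [DecidableEq X]
    (A B : Finset X) (hA : A.Nonempty) (hB : B.Nonempty) :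
    ∑' x : X,
      |(if x ∈ A then ((A.card : ℝ))⁻¹ else 0) - (if x ∈ B then ((B.card : ℝ))⁻¹ else 0)|
      ≤ 2 * (1 - ((A ∩ B).card : ℝ) / ((A ∪ B).card : ℝ)) :=
  stmt11_general A B
end

section
/- Let X be a uniformly locally finite discrete metric space. Suppose for every l ∈ ℕ, k ∈ {1,…,3l}, and x ∈ X we are given a finite nonempty set S(x,k,l) ⊆ X such that: (i) for each l there is S_l > 0 with S(x,k,l) ⊆ B(x,S_l) for all x,k; (ii) for all x,y ∈ X with integer distance d(x,y) ≤ l and all k ∈ {l+1,…,2l}: S(x,k−d(x,y),l) ⊆ S(x,k,l) ∩ S(y,k,l) and S(x,k,l) ∪ S(y,k,l) ⊆ S(x,k+d(x,y),l); (iii) there is p : ℕ → ℝ with |S(x,k,l)| ≤ p(l) for all x,k,l and lim_{n→∞} p(n)^{1/n} = 1. Then X has Property A: for all R,ε > 0 there exists ξ : X → ℓ¹(X) with ‖ξ(x)‖₁ = 1 for all x, ‖ξ(x)−ξ(y)‖₁ ≤ ε whenever d(x,y) ≤ R, and some S > 0 with supp(ξ(x)) ⊆ B(x,S) for all x. -/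
/-!
Fix a scale `l` and let `ξ x` be the average over `k ∈ (l, 2l]` of the uniform probability
measures on `S(x,k,l)`. If `d(x,y) = n ≤ l`, condition (ii) sandwiches `S(x,k,l)` and `S(y,k,l)`
between `S(x,k-n,l)` and `S(x,k+n,l)`. For nested sets `A ⊆ B` the uniform measures are at
ℓ¹-distance `2(1 - |A|/|B|) ≤ 2 log(|B|/|A|)`, so summing over `k` the logarithms telescope and
`‖ξ x - ξ y‖₁ ≤ 8 n log p(l) / l`, which tends to `0` as `l → ∞` because `p(l)^{1/l} → 1`.
-/

open Finset Filter Topology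

section UniformWeight

variable {X : Type*} [DecidableEq X]

noncomputable def uniformWeight (A : Finset X) (z : X) : ℝ :=
  if z ∈ A then (#A : ℝ)⁻¹ else 0

variable {A B C D T : Finset X}

lemma uniformWeight_nonneg (A : Finset X) (z : X) : 0 ≤ uniformWeight A z := by
  unfold uniformWeight
  split_ifs <;> positivity

lemma sum_uniformWeight (hA : A.Nonempty) (hAT : A ⊆ T) : ∑ z ∈ T, uniformWeight A z = 1 := by
  have hA₀ : (#A : ℝ) ≠ 0 := by exact_mod_cast hA.card_pos.ne'
  simp only [uniformWeight]
  rw [sum_ite_mem, inter_eq_right.2 hAT, sum_const, nsmul_eq_mul, mul_inv_cancel₀ hA₀]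

lemma sum_abs_uniformWeight_sub_of_subset (hA : A.Nonempty) (hAB : A ⊆ B) (hBT : B ⊆ T) :
    ∑ z ∈ T, |uniformWeight A z - uniformWeight B z| = 2 * (1 - #A / #B) := by
  have hA₀ : (0 : ℝ) < #A := by exact_mod_cast hA.card_pos
  have hB₀ : (0 : ℝ) < #B := by exact_mod_cast (hA.mono hAB).card_pos
  have hBA : (#B : ℝ)⁻¹ ≤ (#A : ℝ)⁻¹ := inv_anti₀ hA₀ (by exact_mod_cast card_le_card hAB)
  have hpt : ∀ z ∈ T, |uniformWeight A z - uniformWeight B z| =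
      (if z ∈ A then (#A : ℝ)⁻¹ - 2 * (#B : ℝ)⁻¹ else 0) + uniformWeight B z := by
    intro z _
    unfold uniformWeight
    by_cases hzA : z ∈ A
    · rw [if_pos hzA, if_pos hzA, if_pos (hAB hzA), abs_of_nonneg (by linarith)]
      ring
    · by_cases hzB : z ∈ B
      · rw [if_neg hzA, if_neg hzA, if_pos hzB, abs_of_nonpos (by simp)]
        ring
      · simp [hzA, hzB]
  rw [sum_congr rfl hpt, sum_add_distrib, sum_uniformWeight (hA.mono hAB) hBT, sum_ite_mem,
    inter_eq_right.2 (hAB.trans hBT), sum_const, nsmul_eq_mul]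
  field_simp
  ring

lemma sum_abs_uniformWeight_sub_le_log (hA : A.Nonempty) (hAB : A ⊆ B) (hBT : B ⊆ T) :
    ∑ z ∈ T, |uniformWeight A z - uniformWeight B z| ≤ 2 * (Real.log #B - Real.log #A) := by
  have hA₀ : (0 : ℝ) < #A := by exact_mod_cast hA.card_pos
  have hB₀ : (0 : ℝ) < #B := by exact_mod_cast (hA.mono hAB).card_pos
  have hlog := Real.one_sub_inv_le_log_of_pos (div_pos hB₀ hA₀)
  rw [inv_div, Real.log_div hB₀.ne' hA₀.ne'] at hlog
  rw [sum_abs_uniformWeight_sub_of_subset hA hAB hBT]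
  linarith

lemma sum_abs_uniformWeight_sub_le_of_sandwich (hA : A.Nonempty) (hABC : A ⊆ B ∩ C)
    (hBCD : B ∪ C ⊆ D) (hBCT : B ∪ C ⊆ T) :
    ∑ z ∈ T, |uniformWeight B z - uniformWeight C z| ≤ 4 * (Real.log #D - Real.log #A) := by
  have hAB : A ⊆ B := hABC.trans inter_subset_left
  have hAC : A ⊆ C := hABC.trans inter_subset_right
  have hlog : ∀ {E : Finset X}, A ⊆ E → E ⊆ D → Real.log #E ≤ Real.log #D := fun hAE hED =>
    Real.log_le_log (by exact_mod_cast (hA.mono hAE).card_pos)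
      (by exact_mod_cast card_le_card hED)
  calc ∑ z ∈ T, |uniformWeight B z - uniformWeight C z|
      ≤ ∑ z ∈ T, (|uniformWeight A z - uniformWeight B z| +
          |uniformWeight A z - uniformWeight C z|) :=
        sum_le_sum fun z _ => (abs_sub_le _ (uniformWeight A z) _).trans_eq
          (by rw [abs_sub_comm (uniformWeight B z)])
    _ ≤ 2 * (Real.log #B - Real.log #A) + 2 * (Real.log #C - Real.log #A) := by
        rw [sum_add_distrib]
        exact add_le_add
          (sum_abs_uniformWeight_sub_le_log hA hAB (subset_union_left.trans hBCT))
          (sum_abs_uniformWeight_sub_le_log hA hAC (subset_union_right.trans hBCT))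
    _ ≤ 4 * (Real.log #D - Real.log #A) := by
        linarith [hlog hAB (subset_union_left.trans hBCD), hlog hAC (subset_union_right.trans hBCD)]

end UniformWeight

lemma sum_range_sub_shift_le {f : ℕ → ℝ} {l m : ℕ} {L : ℝ} (hf₀ : ∀ i < m, 0 ≤ f i)
    (hfL : ∀ i < m, f (l + i) ≤ L) : ∑ j ∈ range l, (f (j + m) - f j) ≤ m * L := by
  have htele : ∑ j ∈ range l, (f (j + m) - f j) =
      ∑ i ∈ range m, f (l + i) - ∑ i ∈ range m, f i := by
    have h₁ := sum_range_add f l m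
    have h₂ := sum_range_add f m l
    have h₃ : ∑ j ∈ range l, f (j + m) = ∑ j ∈ range l, f (m + j) :=
      sum_congr rfl fun j _ => by rw [add_comm]
    rw [add_comm m l] at h₂
    rw [sum_sub_distrib, h₃]
    linarith
  have hupper : ∑ i ∈ range m, f (l + i) ≤ m * L := by
    simpa using sum_le_card_nsmul (range m) _ L fun i hi => hfL i (mem_range.1 hi)
  have hlower : 0 ≤ ∑ i ∈ range m, f i := sum_nonneg fun i hi => hf₀ i (mem_range.1 hi)
  linarith

lemma tendsto_log_div_of_tendsto_rpow_inv {p : ℕ → ℝ} (hp : ∀ᶠ n in atTop, 0 < p n)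
    (h : Tendsto (fun n : ℕ => p n ^ ((n : ℝ)⁻¹)) atTop (𝓝 1)) :
    Tendsto (fun n : ℕ => Real.log (p n) / n) atTop (𝓝 0) := by
  have hlog := (Real.continuousAt_log one_ne_zero).tendsto.comp h
  rw [Real.log_one] at hlog
  refine hlog.congr' ?_
  filter_upwards [hp] with n hn
  rw [Function.comp_apply, Real.log_rpow hn, inv_mul_eq_div]

section AveragedWeight

variable {X : Type*} [DecidableEq X] (S : X → ℕ → Finset X) (l : ℕ)

noncomputable def averagedWeight (x z : X) : ℝ :=
  (l : ℝ)⁻¹ * ∑ j ∈ range l, uniformWeight (S x (l + 1 + j)) z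

def averagedSupport (x : X) : Finset X :=
  (range l).biUnion fun j => S x (l + 1 + j)

variable {S l}

lemma subset_averagedSupport {x : X} {j : ℕ} (hj : j < l) :
    S x (l + 1 + j) ⊆ averagedSupport S l x :=
  subset_biUnion_of_mem (fun j => S x (l + 1 + j)) (mem_range.2 hj)

lemma averagedWeight_eq_zero_of_notMem {x z : X} (hz : z ∉ averagedSupport S l x) :
    averagedWeight S l x z = 0 := by
  rw [averagedWeight, sum_eq_zero fun j hj => show uniformWeight _ z = 0 from if_neg fun hzS =>
    hz (subset_averagedSupport (mem_range.1 hj) hzS), mul_zero]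

lemma tsum_abs_averagedWeight {x : X} (hl : 1 ≤ l) (hne : ∀ j < l, (S x (l + 1 + j)).Nonempty) :
    ∑' z, |averagedWeight S l x z| = 1 := by
  have hl₀ : (l : ℝ) ≠ 0 := by exact_mod_cast (zero_lt_one.trans_le hl).ne'
  rw [tsum_eq_sum (s := averagedSupport S l x) fun z hz => by
    rw [averagedWeight_eq_zero_of_notMem hz, abs_zero]]
  have hnonneg : ∀ z, 0 ≤ averagedWeight S l x z := fun z =>
    mul_nonneg (by positivity) (sum_nonneg fun j _ => uniformWeight_nonneg _ z)
  rw [sum_congr rfl fun z _ => abs_of_nonneg (hnonneg z)]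
  unfold averagedWeight
  rw [← mul_sum, sum_comm, sum_congr rfl fun j hj =>
    sum_uniformWeight (hne j (mem_range.1 hj)) (subset_averagedSupport (mem_range.1 hj)),
    sum_const, card_range, nsmul_one, inv_mul_cancel₀ hl₀]

lemma sum_abs_averagedWeight_sub_le (x y : X) (T : Finset X) :
    ∑ z ∈ T, |averagedWeight S l x z - averagedWeight S l y z| ≤
      (l : ℝ)⁻¹ * ∑ j ∈ range l,
        ∑ z ∈ T, |uniformWeight (S x (l + 1 + j)) z - uniformWeight (S y (l + 1 + j)) z| := by
  rw [sum_comm, mul_sum]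
  refine sum_le_sum fun z _ => ?_
  rw [averagedWeight, averagedWeight, ← mul_sub, ← sum_sub_distrib, abs_mul,
    abs_of_nonneg (by positivity)]
  gcongr
  exact abs_sum_le_sum_abs _ _

lemma tsum_abs_averagedWeight_sub_le {x y : X} {n : ℕ} {P : ℝ} (hnl : n ≤ l)
    (hne : ∀ k, 1 ≤ k → k ≤ 3 * l → (S x k).Nonempty) (hcard : ∀ k, (#(S x k) : ℝ) ≤ P)
    (hsand : ∀ k, l + 1 ≤ k → k ≤ 2 * l →
      S x (k - n) ⊆ S x k ∩ S y k ∧ S x k ∪ S y k ⊆ S x (k + n)) :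
    ∑' z, |averagedWeight S l x z - averagedWeight S l y z| ≤ 8 * n * Real.log P / l := by
  set T := averagedSupport S l x ∪ averagedSupport S l y
  rw [tsum_eq_sum (s := T) fun z hz => by
    rw [averagedWeight_eq_zero_of_notMem fun h => hz (mem_union_left _ h),
      averagedWeight_eq_zero_of_notMem fun h => hz (mem_union_right _ h), sub_zero, abs_zero]]
  -- `f i = log #(S x k)` for `k = l + 1 - n + i`, so `k ∓ n` with `k = l + 1 + j` are `i = j, j + 2n`
  set f : ℕ → ℝ := fun i => Real.log #(S x (l + 1 - n + i))
  have hstep : ∀ j ∈ range l,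
      ∑ z ∈ T, |uniformWeight (S x (l + 1 + j)) z - uniformWeight (S y (l + 1 + j)) z| ≤
        4 * (f (j + 2 * n) - f j) := by
    intro j hj
    have hj := mem_range.1 hj
    obtain ⟨hinter, hunion⟩ := hsand (l + 1 + j) (by omega) (by omega)
    rw [show l + 1 + j - n = l + 1 - n + j by omega] at hinter
    rw [show l + 1 + j + n = l + 1 - n + (j + 2 * n) by omega] at hunion
    exact sum_abs_uniformWeight_sub_le_of_sandwich (hne _ (by omega) (by omega)) hinter hunion
      (union_subset_union (subset_averagedSupport hj) (subset_averagedSupport hj))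
  have hf₀ : ∀ i < 2 * n, 0 ≤ f i := fun i hi => Real.log_nonneg <| by
    exact_mod_cast (hne (l + 1 - n + i) (by omega) (by omega)).card_pos
  have hfP : ∀ i < 2 * n, f (l + i) ≤ Real.log P := fun i hi => Real.log_le_log
    (by exact_mod_cast (hne (l + 1 - n + (l + i)) (by omega) (by omega)).card_pos) (hcard _)
  calc ∑ z ∈ T, |averagedWeight S l x z - averagedWeight S l y z|
      ≤ (l : ℝ)⁻¹ * ∑ j ∈ range l, 4 * (f (j + 2 * n) - f j) :=
        (sum_abs_averagedWeight_sub_le x y T).trans (by gcongr with j hj; exact hstep j hj)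
    _ ≤ (l : ℝ)⁻¹ * (4 * ((2 * n : ℕ) * Real.log P)) := by
        rw [← mul_sum]
        gcongr
        exact sum_range_sub_shift_le hf₀ hfP
    _ = 8 * n * Real.log P / l := by
        push_cast
        ring

end AveragedWeight

theorem stmt13_general {X : Type*} [MetricSpace X] [DecidableEq X]
    (d : X → X → ℕ) (hd : ∀ x y, (d x y : ℝ) = dist x y)
    (S : X → ℕ → ℕ → Finset X)
    (hSne : ∀ (x : X) (l k : ℕ), 1 ≤ k → k ≤ 3 * l → (S x k l).Nonempty)
    (hi : ∀ l : ℕ, ∃ Sl : ℝ, 0 < Sl ∧ ∀ (x : X) (k : ℕ), 1 ≤ k → k ≤ 3 * l →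
      ∀ z ∈ S x k l, dist x z ≤ Sl)
    (hii : ∀ (x y : X) (l k : ℕ), d x y ≤ l → l + 1 ≤ k → k ≤ 2 * l →
      (S x (k - d x y) l ⊆ S x k l ∩ S y k l) ∧ (S x k l ∪ S y k l ⊆ S x (k + d x y) l))
    (p : ℕ → ℝ)
    (hiii : (∀ (x : X) (k l : ℕ), ((S x k l).card : ℝ) ≤ p l) ∧
      Filter.Tendsto (fun n : ℕ => p n ^ ((n : ℝ)⁻¹)) Filter.atTop (nhds 1)) :
    ∀ R ε : ℝ, 0 < R → 0 < ε → ∃ ξ : X → X → ℝ, ∃ Sb : ℝ, 0 < Sb ∧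
      (∀ x, ∑' y, |ξ x y| = 1) ∧
      (∀ x y, dist x y ≤ R → ∑' z, |ξ x z - ξ y z| ≤ ε) ∧
      (∀ x y, ξ x y ≠ 0 → dist x y ≤ Sb) := by
  intro R ε _ hε
  obtain ⟨hcard, hp⟩ := hiii
  rcases isEmpty_or_nonempty X with _ | ⟨⟨x₀⟩⟩
  · exact ⟨fun _ _ => 0, 1, one_pos, isEmptyElim, isEmptyElim, isEmptyElim⟩
  have hp_one : ∀ l, 1 ≤ l → 1 ≤ p l := fun l hl =>
    le_trans (by exact_mod_cast (hSne x₀ l 1 le_rfl (by omega)).card_pos) (hcard x₀ 1 l)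
  have hlim : Tendsto (fun l : ℕ => 8 * ⌈R⌉₊ * (Real.log (p l) / l)) atTop (𝓝 0) := by
    simpa using (tendsto_log_div_of_tendsto_rpow_inv
      ((eventually_ge_atTop 1).mono fun l hl => one_pos.trans_le (hp_one l hl)) hp).const_mul
      (8 * ⌈R⌉₊ : ℝ)
  obtain ⟨l, hlε, hl₁, hlR⟩ := ((hlim.eventually_lt_const hε).and
    ((eventually_ge_atTop 1).and (eventually_ge_atTop ⌈R⌉₊))).exists
  obtain ⟨Sl, hSl₀, hSl⟩ := hi l
  refine ⟨averagedWeight (fun x k => S x k l) l, Sl, hSl₀, fun x => ?_, fun x y hxy => ?_,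
    fun x z hz => ?_⟩
  · exact tsum_abs_averagedWeight hl₁ fun j hj => hSne x l _ (by omega) (by omega)
  · have hdR : d x y ≤ ⌈R⌉₊ := by
      exact_mod_cast (hd x y ▸ hxy).trans (Nat.le_ceil R)
    calc _ ≤ 8 * d x y * Real.log (p l) / l :=
          tsum_abs_averagedWeight_sub_le (hdR.trans hlR) (hSne x l) (hcard x · l)
            fun k hk₁ hk₂ => hii x y l k (hdR.trans hlR) hk₁ hk₂
      _ ≤ 8 * ⌈R⌉₊ * (Real.log (p l) / l) := by
          rw [mul_div_assoc]
          gcongr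
          exact div_nonneg (Real.log_nonneg (hp_one l hl₁)) (Nat.cast_nonneg l)
      _ ≤ ε := hlε.le
  · obtain ⟨j, hj, hzS⟩ :=
      mem_biUnion.1 (by_contra fun h => hz (averagedWeight_eq_zero_of_notMem h))
    exact hSl x _ (by omega) (by have := mem_range.1 hj; omega) z hzS

theorem stmt13 {X : Type*} [MetricSpace X] [DecidableEq X]
    (hulf : ∀ r : ℝ, 0 < r → ∃ N : ℕ, ∀ x : X,
      (Metric.closedBall x r).Finite ∧ (Metric.closedBall x r).ncard ≤ N)
    (d : X → X → ℕ) (hd : ∀ x y, (d x y : ℝ) = dist x y)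
    (S : X → ℕ → ℕ → Finset X)
    (hSne : ∀ (x : X) (l k : ℕ), 1 ≤ k → k ≤ 3 * l → (S x k l).Nonempty)
    (hi : ∀ l : ℕ, ∃ Sl : ℝ, 0 < Sl ∧ ∀ (x : X) (k : ℕ), 1 ≤ k → k ≤ 3 * l →
      ∀ z ∈ S x k l, dist x z ≤ Sl)
    (hii : ∀ (x y : X) (l k : ℕ), d x y ≤ l → l + 1 ≤ k → k ≤ 2 * l →
      (S x (k - d x y) l ⊆ S x k l ∩ S y k l) ∧ (S x k l ∪ S y k l ⊆ S x (k + d x y) l))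
    (p : ℕ → ℝ)
    (hiii : (∀ (x : X) (k l : ℕ), ((S x k l).card : ℝ) ≤ p l) ∧
      Filter.Tendsto (fun n : ℕ => p n ^ ((n : ℝ)⁻¹)) Filter.atTop (nhds 1)) :
    ∀ R ε : ℝ, 0 < R → 0 < ε → ∃ ξ : X → X → ℝ, ∃ Sb : ℝ, 0 < Sb ∧
      (∀ x, ∑' y, |ξ x y| = 1) ∧
      (∀ x y, dist x y ≤ R → ∑' z, |ξ x z - ξ y z| ≤ ε) ∧
      (∀ x y, ξ x y ≠ 0 → dist x y ≤ Sb) :=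
  stmt13_general d hd S hSne hi hii p hiii
end

section
/- Let (X,ρ,μ) be a coarse median space with parameters K ≥ 1 and H, satisfying (C1): ρ(μ(a,b,c),μ(a',b',c')) ≤ K(ρ(a,a')+ρ(b,b')+ρ(c,c')) + H(0), and satisfying the approximate median axiom with constant γ ≥ 0: ρ(μ(x,y,μ(z,v,w)), μ(μ(x,y,z),μ(x,y,v),w)) ≤ γ for all points. For τ ≥ 0 define [a,b]_τ = {x : ρ(μ(a,b,x), x) ≤ τ}. Suppose μ satisfies (M1) symmetry and (M2) μ(a,a,b)=a exactly. Set L₁(r) = (K+1)r + Kλ + γ + 2H(0), where λ ≥ 0 is a constant such that μ(x,y,z) ∈ [x,y]_λ for all x,y,z. Then for any a,b ∈ X, x ∈ [a,b]_λ, and r ≥ 0: [a,x]_r ⊆ [a,b]_{L₁(r)}. -/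
theorem stmt14 {X : Type*} [MetricSpace X] (med : X → X → X → X)
    (K H0 γ lam : ℝ) (hK : 1 ≤ K) (hH0 : 0 ≤ H0) (hγ : 0 ≤ γ) (hlam : 0 ≤ lam)
    (hC1 : ∀ a b c a' b' c',
      dist (med a b c) (med a' b' c') ≤ K * (dist a a' + dist b b' + dist c c') + H0)
    (hM1a : ∀ a b c, med a b c = med b c a)
    (hM1b : ∀ a b c, med a b c = med b a c)
    (hM2 : ∀ a b, med a a b = a)
    (hM3 : ∀ x y z v w, dist (med x y (med z v w)) (med (med x y z) (med x y v) w) ≤ γ)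
    (hlamdef : ∀ x y z, dist (med x y (med x y z)) (med x y z) ≤ lam)
    (a b x : X) (hx : dist (med a b x) x ≤ lam) (r : ℝ) (hr : 0 ≤ r) :
    ∀ z, dist (med a x z) z ≤ r →
      dist (med a b z) z ≤ (K + 1) * r + K * lam + γ + 2 * H0 := by
  intro z hz
  have haba : med a b a = a := by rw [hM1a, hM1a, hM2]
  have h1 : dist (med a b z) (med a b (med a x z)) ≤ K * r + H0 := by
    have := hC1 a b z a b (med a x z)
    simp only [dist_self] at this
    have hd : dist z (med a x z) ≤ r := by rwa [dist_comm]
    nlinarith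
  have h2 : dist (med a b (med a x z)) (med a (med a b x) z) ≤ γ := by
    have := hM3 a b a x z
    rwa [haba] at this
  have h3 : dist (med a (med a b x) z) (med a x z) ≤ K * lam + H0 := by
    have := hC1 a (med a b x) z a x z
    simp only [dist_self] at this
    nlinarith
  calc dist (med a b z) z ≤ dist (med a b z) (med a b (med a x z))
        + dist (med a b (med a x z)) (med a (med a b x) z)
        + dist (med a (med a b x) z) (med a x z)
        + dist (med a x z) z := by
        have := dist_triangle4 (med a b z) (med a b (med a x z)) (med a (med a b x) z) (med a x z)
        have := dist_triangle (med a b z) (med a x z) z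
        linarith [dist_triangle (med a b z) (med a (med a b x) z) (med a x z),
          dist_triangle (med a b z) (med a b (med a x z)) (med a (med a b x) z)]
    _ ≤ (K + 1) * r + K * lam + γ + 2 * H0 := by linarith
end

section
/- Let X be the vertex set of a finite-dimensional CAT(0) cube complex of dimension d, with edge-path metric ρ. Let x, x₀, y, z be vertices such that z lies on the normal cube path from y to x₀ at distance (in cube-path steps) at least ρ(x,y) from y. Then every half-space containing both x and x₀ also contains z; equivalently z ∈ [x,x₀], the median-algebra interval. -/
/-- Convexity with respect to the median intervals. -/
def IsMedConvex {Phi : Type*} (M : MedianAlgebra Phi) (H : Set Phi) : Prop :=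
  ∀ a ∈ H, ∀ b ∈ H, ∀ c, M.med a b c = c → c ∈ H

/-- A half-space: a convex set with convex complement, both nonempty. -/
def IsHalfspace {Phi : Type*} (M : MedianAlgebra Phi) (h : Set Phi) : Prop :=
  IsMedConvex M h ∧ IsMedConvex M hᶜ ∧ h.Nonempty ∧ hᶜ.Nonempty

/-- The wall determined by a half-space separates the two points. -/
def SepBy {Phi : Type*} (h : Set Phi) (u w : Phi) : Prop :=
  (u ∈ h ∧ w ∉ h) ∨ (u ∉ h ∧ w ∈ h)

/-- Two walls (given by half-spaces) cross. -/
def CrossesW {Phi : Type*} (h k : Set Phi) : Prop :=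
  (h ∩ k).Nonempty ∧ (h ∩ kᶜ).Nonempty ∧ (hᶜ ∩ k).Nonempty ∧ (hᶜ ∩ kᶜ).Nonempty

/-- A normal cube path from y to x₀, recorded by the common vertices
v 0 = y, v 1, …, v m = x₀ of consecutive cubes: each step moves inside the
interval towards x₀ (so each wall is crossed at most once and all walls
separating y from x₀ are crossed), the walls crossed at each step pairwise
cross (they span a cube), and each step is maximal: no uncrossed wall
separating the path from x₀ crosses all the walls of the current cube. -/
def NormalCubePath {Phi : Type*} (M : MedianAlgebra Phi)
    (y x₀ : Phi) (v : ℕ → Phi) (m : ℕ) : Prop :=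
  v 0 = y ∧ v m = x₀ ∧
  (∀ i < m, M.med (v i) x₀ (v (i + 1)) = v (i + 1)) ∧
  (∀ i < m, ∀ h k : Set Phi, IsHalfspace M h → IsHalfspace M k →
    SepBy h (v i) (v (i + 1)) → SepBy k (v i) (v (i + 1)) →
    h ≠ k → h ≠ kᶜ → CrossesW h k) ∧
  (∀ i < m, ∀ L : Set Phi, IsHalfspace M L → (v i ∈ L ↔ v (i + 1) ∈ L) →
    SepBy L (v (i + 1)) x₀ →
    ∃ K : Set Phi, IsHalfspace M K ∧ SepBy K (v i) (v (i + 1)) ∧ ¬ CrossesW L K)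

namespace Stmt19Aux

variable {Phi : Type*} (M : MedianAlgebra Phi)

lemma mrot (a b c : Phi) : M.med a b c = M.med b c a := M.m1a a b c
lemma mswap (a b c : Phi) : M.med a b c = M.med b a c := M.m1b a b c
lemma m132 (a b c : Phi) : M.med a b c = M.med a c b := by
  rw [mswap M a b c, mrot M b a c]
lemma m312 (a b c : Phi) : M.med a b c = M.med c a b := by
  rw [mrot M a b c, mrot M b c a]
lemma m321 (a b c : Phi) : M.med a b c = M.med c b a := by
  rw [m312 M a b c, m132 M c a b]
lemma maba (a b : Phi) : M.med a b a = a := by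
  rw [m132 M a b a]; exact M.m2 a b
lemma mbaa (b a : Phi) : M.med b a a = a := by
  rw [mrot M b a a]; exact M.m2 a b
lemma mabs (a b c : Phi) : M.med a b (M.med a b c) = M.med a b c := by
  rw [M.m3 a b a b c, maba M a b, mbaa M a b]

/-- Key quasi-identity for convexity of the join `C ∨ {a}`. -/
lemma join_key (h₁ h₂ a z₁ z₂ z : Phi)
    (G1 : M.med h₁ a z₁ = z₁) (G2 : M.med h₂ a z₂ = z₂) (G3 : M.med z₁ z₂ z = z) :
    M.med (M.med h₁ h₂ z) a z = z := by
  set α := M.med a z h₁ with hα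
  set β := M.med a z h₂ with hβ
  have G1' : M.med a h₁ z₁ = z₁ := (mswap M a h₁ z₁).trans G1
  have G2' : M.med a h₂ z₂ = z₂ := (mswap M a h₂ z₂).trans G2
  have hα2 : α = M.med z₁ (M.med a h₁ z₂) z := by
    rw [hα, m132 M a z h₁]
    conv_lhs => rw [← G3]
    rw [M.m3 a h₁ z₁ z₂ z, G1']
  have hβ2 : β = M.med z₂ (M.med a h₂ z₁) z := by
    rw [hβ, m132 M a z h₂]
    conv_lhs => rw [← G3]
    rw [M.m3 a h₂ z₁ z₂ z, G2', mswap M (M.med a h₂ z₁) z₂ z]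
  have Pα : M.med z₁ z α = α := by
    rw [hα2, m132 M z₁ (M.med a h₁ z₂) z, mabs M z₁ z (M.med a h₁ z₂)]
  have Pβ : M.med z₂ z β = β := by
    rw [hβ2, m132 M z₂ (M.med a h₂ z₁) z, mabs M z₂ z (M.med a h₂ z₁)]
  have expand : M.med (M.med h₁ h₂ z) a z = M.med α β z := by
    rw [mrot M (M.med h₁ h₂ z) a z, M.m3 a z h₁ h₂ z, ← hα, ← hβ]
  have g3' : M.med z z₁ z₂ = z := (mrot M z z₁ z₂).trans G3
  have hzbz1 : M.med z β z₁ = z := by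
    rw [m132 M z β z₁]
    conv_lhs => rw [← Pβ]
    rw [M.m3 z z₁ z₂ z β, g3', maba M z z₁, M.m2 z β]
  calc M.med (M.med h₁ h₂ z) a z = M.med α β z := expand
    _ = M.med z β α := m321 M α β z
    _ = M.med (M.med z β z₁) (M.med z β z) α := by
        conv_lhs => rw [← Pα, M.m3 z β z₁ z α]
    _ = M.med z z α := by rw [hzbz1, maba M z β]
    _ = z := M.m2 z α

/-- Key quasi-identity for the separation theorem. -/
lemma sep_key (m₁ m₂ a b c p : Phi)
    (H1 : M.med m₁ a p = p) (H2 : M.med m₂ b p = p) (H3 : M.med a b c = c) :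
    M.med (M.med m₁ m₂ p) c p = p := by
  have H1' : M.med p m₁ a = p := (mrot M p m₁ a).trans H1
  have H2' : M.med p m₂ b = p := (mrot M p m₂ b).trans H2
  have H1'' : M.med p a m₁ = p := (m132 M p a m₁).trans H1'
  have hu : M.med p c m₁ = M.med p (M.med p m₁ b) c := by
    rw [m132 M p c m₁]
    conv_lhs => rw [← H3]
    rw [M.m3 p m₁ a b c, H1', mswap M p (M.med p m₁ b) c]
  have hw : M.med p c m₂ = M.med p (M.med p m₂ a) c := by
    rw [m132 M p c m₂]
    conv_lhs => rw [← H3]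
    rw [M.m3 p m₂ a b c, H2', mswap M (M.med p m₂ a) p c]
  have q3 : M.med p (M.med p m₂ a) m₁ = p := by
    rw [m132 M p (M.med p m₂ a) m₁, M.m3 p m₁ p m₂ a, maba M p m₁,
      m132 M p (M.med p m₁ m₂) a, mrot M p m₁ m₂, M.m3 p a m₁ m₂ p, H1'',
      maba M p (M.med p a m₂)]
  have q2 : M.med p (M.med p m₂ a) (M.med p m₁ b) = p := by
    rw [M.m3 p (M.med p m₂ a) p m₁ b, maba M p (M.med p m₂ a), q3, M.m2 p b]
  have q1 : M.med p (M.med p m₁ b) (M.med p m₂ a) = p :=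
    (m132 M p (M.med p m₁ b) (M.med p m₂ a)).trans q2
  have key1 : M.med p (M.med p (M.med p m₂ a) c) (M.med p m₁ b) = p := by
    rw [m132 M p (M.med p (M.med p m₂ a) c) (M.med p m₁ b),
      M.m3 p (M.med p m₁ b) p (M.med p m₂ a) c, maba M p (M.med p m₁ b), q1, M.m2 p c]
  calc M.med (M.med m₁ m₂ p) c p
      = M.med p c (M.med m₁ m₂ p) := m321 M (M.med m₁ m₂ p) c p
    _ = M.med (M.med p c m₁) (M.med p c m₂) p := M.m3 p c m₁ m₂ p
    _ = M.med (M.med p (M.med p m₁ b) c) (M.med p (M.med p m₂ a) c) p := by rw [hu, hw]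
    _ = M.med p (M.med p (M.med p m₂ a) c) (M.med p (M.med p m₁ b) c) :=
        m321 M _ _ p
    _ = M.med (M.med p (M.med p (M.med p m₂ a) c) p)
          (M.med p (M.med p (M.med p m₂ a) c) (M.med p m₁ b)) c :=
        M.m3 p (M.med p (M.med p m₂ a) c) p (M.med p m₁ b) c
    _ = M.med p p c := by rw [maba M p (M.med p (M.med p m₂ a) c), key1]
    _ = p := M.m2 p c

/-- Convexity of median intervals. -/
lemma interval_convex (x₀ x₁ : Phi) : IsMedConvex M {z | M.med x₀ x₁ z = z} := by
  intro a ha b hb z hz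
  simp only [Set.mem_setOf_eq] at ha hb ⊢
  calc M.med x₀ x₁ z = M.med x₀ x₁ (M.med a b z) := by rw [hz]
    _ = M.med (M.med x₀ x₁ a) (M.med x₀ x₁ b) z := M.m3 x₀ x₁ a b z
    _ = M.med a b z := by rw [ha, hb]
    _ = z := hz

lemma crossesW_of_compl (h k : Set Phi) (hc : CrossesW h kᶜ) : CrossesW h k := by
  obtain ⟨A, B, C, D⟩ := hc
  rw [compl_compl] at B D
  exact ⟨B, A, D, C⟩

lemma halfspace_compl (h : Set Phi) (hh : IsHalfspace M h) : IsHalfspace M hᶜ :=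
  ⟨hh.2.1, by rw [compl_compl]; exact hh.1, hh.2.2.2, by rw [compl_compl]; exact hh.2.2.1⟩

/-- Kakutani separation in a median algebra. -/
lemma halfspace_sep (C : Set Phi) (hC : IsMedConvex M C) (hne : C.Nonempty)
    (p : Phi) (hp : p ∉ C) :
    ∃ H : Set Phi, IsHalfspace M H ∧ C ⊆ H ∧ p ∉ H := by
  obtain ⟨Mx, hCMx, hMx⟩ := zorn_subset_nonempty
    {D : Set Phi | IsMedConvex M D ∧ C ⊆ D ∧ p ∉ D}
    (fun c hcS hchain hcne => by
      refine ⟨⋃₀ c, ⟨?_, ?_, ?_⟩, fun s hs => Set.subset_sUnion_of_mem hs⟩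
      · intro a ha b hb z hz
        obtain ⟨D₁, hD₁, haD⟩ := ha
        obtain ⟨D₂, hD₂, hbD⟩ := hb
        rcases hchain.total hD₁ hD₂ with hle | hle
        · exact ⟨D₂, hD₂, (hcS hD₂).1 a (hle haD) b hbD z hz⟩
        · exact ⟨D₁, hD₁, (hcS hD₁).1 a haD b (hle hbD) z hz⟩
      · obtain ⟨s, hs⟩ := hcne
        exact (hcS hs).2.1.trans (Set.subset_sUnion_of_mem hs)
      · rintro ⟨D, hD, hpD⟩
        exact (hcS hD).2.2 hpD)
    C ⟨hC, subset_rfl, hp⟩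
  obtain ⟨hMconv, hCM, hpM⟩ := hMx.1
  have hMne : Mx.Nonempty := hne.mono hCM
  have hJ : ∀ w : Phi, w ∉ Mx → ∃ m' ∈ Mx, M.med m' w p = p := by
    intro w hw
    by_contra hcon
    push_neg at hcon
    have hJS : {u : Phi | ∃ h ∈ Mx, M.med h w u = u} ∈
        {D : Set Phi | IsMedConvex M D ∧ C ⊆ D ∧ p ∉ D} := by
      refine ⟨?_, ?_, ?_⟩
      · rintro z₁ ⟨h₁, hh₁, e₁⟩ z₂ ⟨h₂, hh₂, e₂⟩ z hz
        exact ⟨M.med h₁ h₂ z, hMconv h₁ hh₁ h₂ hh₂ _ (mabs M h₁ h₂ z),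
          join_key M h₁ h₂ w z₁ z₂ z e₁ e₂ hz⟩
      · intro u hu
        exact ⟨u, hCM hu, maba M u w⟩
      · rintro ⟨h, hh, he⟩
        exact hcon h hh he
    have hMsub : Mx ⊆ {u : Phi | ∃ h ∈ Mx, M.med h w u = u} :=
      fun h hh => ⟨h, hh, maba M h w⟩
    have hsub := hMx.2 hJS hMsub
    obtain ⟨h₀, hh₀⟩ := hMne
    exact hw (hsub ⟨h₀, hh₀, mbaa M h₀ w⟩)
  have hcompl : IsMedConvex M Mxᶜ := by
    intro a ha b hb z hz
    by_contra hzc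
    have hzM : z ∈ Mx := not_not.mp hzc
    obtain ⟨m₁, hm₁, e₁⟩ := hJ a ha
    obtain ⟨m₂, hm₂, e₂⟩ := hJ b hb
    have hn : M.med m₁ m₂ p ∈ Mx := hMconv m₁ hm₁ m₂ hm₂ _ (mabs M m₁ m₂ p)
    exact hpM (hMconv _ hn z hzM p (sep_key M m₁ m₂ a b z p e₁ e₂ hz))
  exact ⟨Mx, ⟨hMconv, hcompl, hMne, ⟨p, hpM⟩⟩, hCM, hpM⟩

end Stmt19Aux

theorem stmt19 {Phi : Type*} (M : MedianAlgebra Phi) (y x₀ x : Phi)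
    (v : ℕ → Phi) (m j : ℕ)
    (hpath : NormalCubePath M y x₀ v m) (hjm : j ≤ m)
    (hfin : {h : Set Phi | IsHalfspace M h ∧ x ∈ h ∧ y ∉ h}.Finite)
    (hcard : {h : Set Phi | IsHalfspace M h ∧ x ∈ h ∧ y ∉ h}.ncard ≤ j) :
    (∀ h : Set Phi, IsHalfspace M h → x ∈ h → x₀ ∈ h → v j ∈ h) ∧
      M.med x x₀ (v j) = v j := by
  open Stmt19Aux in
  obtain ⟨hv0, hvm, hstep, -, hnorm⟩ := hpath
  set S : ℕ → Set (Set Phi) :=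
    fun i => {h | IsHalfspace M h ∧ x ∈ h ∧ x₀ ∈ h ∧ v i ∉ h} with hS
  have mono : ∀ i < m, S (i + 1) ⊆ S i := by
    rintro i him h ⟨hh, hx, hx0, hv1⟩
    refine ⟨hh, hx, hx0, fun hvi => hv1 ?_⟩
    exact hh.1 (v i) hvi x₀ hx0 _ (hstep i him)
  have strict : ∀ i < m, (S i).Nonempty → ∃ h ∈ S i, v (i + 1) ∈ h := by
    rintro i him ⟨L, hL, hxL, hx0L, hviL⟩
    by_cases hv1 : v (i + 1) ∈ L
    · exact ⟨L, ⟨hL, hxL, hx0L, hviL⟩, hv1⟩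
    · obtain ⟨K, hK, hsep, hnc⟩ :=
        hnorm i him L hL (iff_of_false hviL hv1) (Or.inr ⟨hv1, hx0L⟩)
      have key : ∀ K' : Set Phi, IsHalfspace M K' → v i ∉ K' → v (i + 1) ∈ K' →
          ¬ CrossesW L K' → ∃ h ∈ S i, v (i + 1) ∈ h := by
        intro K' hK' hviK hv1K hncK
        have hx0K : x₀ ∈ K' := by
          by_contra hx0K
          exact hK'.2.1 (v i) hviK x₀ hx0K _ (hstep i him) hv1K
        have hxK : x ∈ K' := by
          by_contra hxK
          exact hncK ⟨⟨x₀, hx0L, hx0K⟩, ⟨x, hxL, hxK⟩,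
            ⟨v (i + 1), hv1, hv1K⟩, ⟨v i, hviL, hviK⟩⟩
        exact ⟨K', ⟨hK', hxK, hx0K, hviK⟩, hv1K⟩
      rcases hsep with ⟨hiK, h1K⟩ | ⟨hiK, h1K⟩
      · exact key Kᶜ (halfspace_compl M K hK) (fun hc => hc hiK) h1K
          (fun hc => hnc (crossesW_of_compl L K hc))
      · exact key K hK hiK h1K hnc
  have main : ∀ i, i ≤ j → (S i).Finite ∧ (S i).ncard + i ≤ j := by
    intro i
    induction i with
    | zero =>
      intro _
      have hsub : S 0 ⊆ {h : Set Phi | IsHalfspace M h ∧ x ∈ h ∧ y ∉ h} := by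
        rintro h ⟨hh, hx, hx0, hv⟩
        rw [hv0] at hv
        exact ⟨hh, hx, hv⟩
      exact ⟨hfin.subset hsub,
        by simpa using le_trans (Set.ncard_le_ncard hsub hfin) hcard⟩
    | succ i ih =>
      intro hij
      obtain ⟨hfi, hci⟩ := ih (Nat.le_of_succ_le hij)
      have him : i < m := lt_of_lt_of_le (Nat.lt_of_succ_le hij) hjm
      by_cases hne : (S i).Nonempty
      · obtain ⟨h, hh, hv1⟩ := strict i him hne
        have hss : S (i + 1) ⊂ S i :=
          ⟨mono i him, fun hsub => (hsub hh).2.2.2 hv1⟩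
        have hlt := Set.ncard_lt_ncard hss hfi
        exact ⟨hfi.subset (mono i him), by omega⟩
      · rw [Set.not_nonempty_iff_eq_empty] at hne
        have hemp : S (i + 1) = ∅ :=
          Set.eq_empty_of_subset_empty (hne ▸ mono i him)
        refine ⟨by simp [hemp], ?_⟩
        rw [hemp, Set.ncard_empty]
        omega
  obtain ⟨hfj, hcj⟩ := main j le_rfl
  have hSj : S j = ∅ := (Set.ncard_eq_zero hfj).mp (by omega)
  have part1 : ∀ h : Set Phi, IsHalfspace M h → x ∈ h → x₀ ∈ h → v j ∈ h := by
    intro h hh hx hx0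
    by_contra hv
    exact (Set.eq_empty_iff_forall_notMem.mp hSj h) ⟨hh, hx, hx0, hv⟩
  refine ⟨part1, ?_⟩
  by_contra hvj
  obtain ⟨H, hH, hIH, hvH⟩ := halfspace_sep M {z | M.med x x₀ z = z}
    (interval_convex M x x₀) ⟨x, maba M x x₀⟩ (v j) hvj
  exact hvH (part1 H hH (hIH (maba M x x₀)) (hIH (mbaa M x x₀)))
end
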